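/- arXiv:1711.06050 — 5 statements merged into one kernel-verified Lean document; each statement's English description precedes it below -/
import Mathlib

section
/- A quadratic first integral I(u) = uᵀ S u (S symmetric) of a vector field f is exactly preserved by any Runge-Kutta method whose coefficients satisfy the symplecticity condition b_i a_{ij} + b_j a_{ji} − b_i b_j = 0 for all i, j: I(Φ_h^f(u)) = I(u). -/
open Matrix

/-- a quadratic first integral `I u = uᵀ S u` (`S` symmetric,
`uᵀ S f u = 0` for all `u`) is exactly preserved by any Runge-Kutta method whose
coefficients satisfy the symplecticity condition
`b i * a i j + b j * a j i - b i * b j = 0`. -/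
theorem stmt5 {D s : ℕ}
    (S : Matrix (Fin D) (Fin D) ℝ) (hS : Sᵀ = S)
    (f : (Fin D → ℝ) → (Fin D → ℝ))
    (hint : ∀ u : Fin D → ℝ, u ⬝ᵥ (S *ᵥ f u) = 0)
    (a : Fin s → Fin s → ℝ) (b : Fin s → ℝ)
    (hsympl : ∀ i j, b i * a i j + b j * a j i - b i * b j = 0)
    (h : ℝ) (u : Fin D → ℝ)
    (W : Fin s → (Fin D → ℝ))
    (hW : ∀ i, W i = u + h • ∑ j, a i j • f (W j)) :
    (u + h • ∑ i, b i • f (W i)) ⬝ᵥ (S *ᵥ (u + h • ∑ i, b i • f (W i)))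
      = u ⬝ᵥ (S *ᵥ u) := by
  have sym : ∀ x y : Fin D → ℝ, x ⬝ᵥ S *ᵥ y = y ⬝ᵥ S *ᵥ x := by
    intro x y
    rw [Matrix.dotProduct_mulVec, ← Matrix.mulVec_transpose, hS, dotProduct_comm]
  set F : Fin s → Fin D → ℝ := fun i => f (W i) with hFdef
  have mvsum : ∀ (g : Fin s → Fin D → ℝ), S *ᵥ (∑ i, g i) = ∑ i, S *ᵥ g i := by
    intro g
    ext k
    simp [Matrix.mulVec, dotProduct, Finset.sum_apply, Finset.mul_sum]
    exact Finset.sum_comm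
  have dsuml : ∀ (g : Fin s → Fin D → ℝ) (w : Fin D → ℝ),
      (∑ i, g i) ⬝ᵥ w = ∑ i, g i ⬝ᵥ w := by
    intro g w
    simp [dotProduct, Finset.sum_apply, Finset.sum_mul]
    exact Finset.sum_comm
  have dsumr : ∀ (g : Fin s → Fin D → ℝ) (w : Fin D → ℝ),
      w ⬝ᵥ (∑ i, g i) = ∑ i, w ⬝ᵥ g i := by
    intro g w
    simp [dotProduct, Finset.sum_apply, Finset.mul_sum]
    exact Finset.sum_comm
  -- the key consequence of the first integral property at the stages
  have key : ∀ i, u ⬝ᵥ S *ᵥ F i = -h * ∑ j, a i j * (F j ⬝ᵥ S *ᵥ F i) := by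
    intro i
    have h0 : (u + h • ∑ j, a i j • F j) ⬝ᵥ S *ᵥ F i = 0 := by
      rw [← hW i]; exact hint (W i)
    rw [add_dotProduct, smul_dotProduct, dsuml] at h0
    simp only [smul_dotProduct, smul_eq_mul] at h0
    linarith [h0]
  -- expansion of the quadratic form
  have t1 : (h • ∑ i, b i • F i) ⬝ᵥ S *ᵥ u = h * ∑ i, b i * (u ⬝ᵥ S *ᵥ F i) := by
    rw [smul_dotProduct, dsuml, smul_eq_mul]
    congr 1
    exact Finset.sum_congr rfl fun i _ => by
      rw [smul_dotProduct, smul_eq_mul, sym]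
  have t2 : u ⬝ᵥ S *ᵥ (h • ∑ i, b i • F i) = h * ∑ i, b i * (u ⬝ᵥ S *ᵥ F i) := by
    rw [Matrix.mulVec_smul, dotProduct_smul, mvsum, dsumr, smul_eq_mul]
    congr 1
    exact Finset.sum_congr rfl fun i _ => by
      rw [Matrix.mulVec_smul, dotProduct_smul, smul_eq_mul]
  have t3 : (h • ∑ i, b i • F i) ⬝ᵥ S *ᵥ (h • ∑ i, b i • F i)
      = h ^ 2 * ∑ i, ∑ j, b i * b j * (F i ⬝ᵥ S *ᵥ F j) := by
    rw [smul_dotProduct, Matrix.mulVec_smul, dotProduct_smul, dsuml, smul_eq_mul, smul_eq_mul]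
    rw [show (∑ i, (b i • F i) ⬝ᵥ S *ᵥ ∑ j, b j • F j)
        = ∑ i, ∑ j, b i * b j * (F i ⬝ᵥ S *ᵥ F j) from ?_]
    · ring
    refine Finset.sum_congr rfl fun i _ => ?_
    rw [smul_dotProduct, mvsum, dsumr, smul_eq_mul, Finset.mul_sum]
    exact Finset.sum_congr rfl fun j _ => by
      rw [Matrix.mulVec_smul, dotProduct_smul, smul_eq_mul]; ring
  -- abbreviate the double sum
  set Z : ℝ := ∑ i, ∑ j, b i * a i j * (F j ⬝ᵥ S *ᵥ F i) with hZ
  have hX : ∑ i, b i * (u ⬝ᵥ S *ᵥ F i) = -h * Z := by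
    have step : ∀ i : Fin s, b i * (u ⬝ᵥ S *ᵥ F i)
        = -h * ∑ j, b i * a i j * (F j ⬝ᵥ S *ᵥ F i) := by
      intro i
      rw [key i, Finset.mul_sum, Finset.mul_sum, Finset.mul_sum]
      exact Finset.sum_congr rfl fun j _ => by ring
    rw [Finset.sum_congr rfl fun i _ => step i, ← Finset.mul_sum, hZ]
  -- combinatorial identity from symplecticity
  have comb : ∑ i, ∑ j, b i * b j * (F i ⬝ᵥ S *ᵥ F j) = 2 * Z := by
    have swap : Z = ∑ i, ∑ j, b j * a j i * (F i ⬝ᵥ S *ᵥ F j) := by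
      rw [hZ]; exact Finset.sum_comm
    calc ∑ i, ∑ j, b i * b j * (F i ⬝ᵥ S *ᵥ F j)
        = ∑ i, ∑ j, (b i * a i j * (F i ⬝ᵥ S *ᵥ F j)
            + b j * a j i * (F i ⬝ᵥ S *ᵥ F j)) :=
          Finset.sum_congr rfl fun i _ => Finset.sum_congr rfl fun j _ => by
            linear_combination (-(F i ⬝ᵥ S *ᵥ F j)) * hsympl i j
      _ = (∑ i, ∑ j, b i * a i j * (F i ⬝ᵥ S *ᵥ F j))
            + ∑ i, ∑ j, b j * a j i * (F i ⬝ᵥ S *ᵥ F j) := by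
          rw [← Finset.sum_add_distrib]
          exact Finset.sum_congr rfl fun i _ => Finset.sum_add_distrib
      _ = Z + Z := by
          rw [← swap]
          congr 1
          rw [hZ]
          exact Finset.sum_congr rfl fun i _ => Finset.sum_congr rfl fun j _ => by
            rw [sym (F j) (F i)]
      _ = 2 * Z := by ring
  calc (u + h • ∑ i, b i • F i) ⬝ᵥ S *ᵥ (u + h • ∑ i, b i • F i)
      = u ⬝ᵥ S *ᵥ u + u ⬝ᵥ S *ᵥ (h • ∑ i, b i • F i)
        + ((h • ∑ i, b i • F i) ⬝ᵥ S *ᵥ u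
        + (h • ∑ i, b i • F i) ⬝ᵥ S *ᵥ (h • ∑ i, b i • F i)) := by
        rw [Matrix.mulVec_add, dotProduct_add, add_dotProduct, add_dotProduct]
        ring
    _ = u ⬝ᵥ S *ᵥ u + h * (-h * Z) + (h * (-h * Z) + h ^ 2 * (2 * Z)) := by
        rw [t1, t2, t3, hX, comb]
    _ = u ⬝ᵥ S *ᵥ u := by ring
end

section
/- If the Runge-Kutta coefficients satisfy the time-symmetry conditions b_{s+1-i} = b_i, c_{s+1-i} = 1 - c_i, and a_{s+1-i,s+1-j} + a_{ij} = b_j for all i,j, then the RK step map applied to an autonomous vector field f satisfies Φ_{-h}^f ∘ Φ_h^f = id, i.e., Φ_{-h}^f = (Φ_h^f)⁻¹. -/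
/-- if the Runge–Kutta coefficients satisfy the time-symmetry conditions
`b_{s+1-i} = b_i`, `c_{s+1-i} = 1 - c_i` and `a_{s+1-i,s+1-j} + a_{ij} = b_j`
(expressed with `Fin.rev`), and the stage equations have unique solutions (so that the
step maps `Φ h` and `Φ (-h)` are well defined via stage maps `W`), then
`Φ (-h) ∘ Φ h = id`, i.e. the RK step map is time-symmetric. -/
theorem stmt6 {D s : ℕ}
    (a : Fin s → Fin s → ℝ) (b : Fin s → ℝ)
    (hb : ∀ i : Fin s, b i.rev = b i)
    (hc : ∀ i : Fin s, (∑ j, a i.rev j) = 1 - ∑ j, a i j)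
    (ha : ∀ i j : Fin s, a i.rev j.rev + a i j = b j)
    (f : (Fin D → ℝ) → (Fin D → ℝ)) (hf : ContDiff ℝ (⊤ : ℕ∞) f)
    (h : ℝ)
    (W : ℝ → (Fin D → ℝ) → Fin s → (Fin D → ℝ))
    (hW : ∀ (τ : ℝ) (u : Fin D → ℝ), τ = h ∨ τ = -h →
        ∀ i, W τ u i = u + τ • ∑ j, a i j • f (W τ u j))
    (huniq : ∀ (τ : ℝ) (u : Fin D → ℝ), (τ = h ∨ τ = -h) →
        ∀ V V' : Fin s → (Fin D → ℝ),
          (∀ i, V i = u + τ • ∑ j, a i j • f (V j)) →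
          (∀ i, V' i = u + τ • ∑ j, a i j • f (V' j)) → V = V')
    (Φ : ℝ → (Fin D → ℝ) → (Fin D → ℝ))
    (hΦ : ∀ (τ : ℝ) (u : Fin D → ℝ), Φ τ u = u + τ • ∑ i, b i • f (W τ u i)) :
    ∀ u : Fin D → ℝ, Φ (-h) (Φ h u) = u := by
  intro u
  set u₁ := Φ h u with hu₁
  have key : ∀ i, W h u i.rev = u₁ + (-h) • ∑ j, a i j • f (W h u j.rev) := by
    intro i
    have h1 := hW h u (Or.inl rfl) i.rev
    rw [h1, hu₁, hΦ]
    have e1 : ∑ j, a i j • f (W h u j.rev) = ∑ j, a i j.rev • f (W h u j) :=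
      Fintype.sum_equiv (Fin.revPerm) _ _ (fun j => by simp)
    rw [e1]
    have e2 : ∀ j, a i.rev j = b j - a i j.rev := by
      intro j
      have h2 := ha i j.rev
      rw [Fin.rev_rev] at h2
      have h3 := hb j
      linarith
    have e4 : ∑ j, a i.rev j • f (W h u j)
        = (∑ j, b j • f (W h u j)) - ∑ j, a i j.rev • f (W h u j) := by
      rw [← Finset.sum_sub_distrib]
      exact Finset.sum_congr rfl (fun j _ => by rw [e2 j, sub_smul])
    rw [e4]
    simp only [smul_sub, neg_smul]
    abel
  have hWeq : W (-h) u₁ = fun i => W h u i.rev :=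
    huniq (-h) u₁ (Or.inr rfl) _ _ (hW (-h) u₁ (Or.inr rfl)) key
  rw [hΦ, hWeq]
  have e3 : ∑ i, b i • f (W h u i.rev) = ∑ i, b i • f (W h u i) :=
    Fintype.sum_equiv (Fin.revPerm) _ _ (fun i => by simp [hb])
  simp only [e3]
  rw [hu₁, hΦ]
  simp only [neg_smul]
  abel
end

section
/- The map ψ defined implicitly by the midpoint rule u* = u + h g((u+u*)/2) for a Hamiltonian vector field g = J⁻¹∇G is symplectic: its Jacobian M = ∂u*/∂u satisfies Mᵀ J M = J. -/
open scoped RealInnerProductSpace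

/-- Canonical symplectic matrix `J = [[0, -I],[I, 0]]`, as a map on
`EuclideanSpace ℝ (Fin d ⊕ Fin d)` (first block = positions, second block = momenta). -/
noncomputable def Jmap {d : ℕ} (x : EuclideanSpace ℝ (Fin d ⊕ Fin d)) :
    EuclideanSpace ℝ (Fin d ⊕ Fin d) :=
  (WithLp.equiv 2 _).symm (Sum.elim (fun j => -(x (Sum.inr j))) (fun j => x (Sum.inl j)))

/-- Inverse `J⁻¹ = [[0, I],[-I, 0]]` of the canonical symplectic matrix. -/
noncomputable def Jinv {d : ℕ} (x : EuclideanSpace ℝ (Fin d ⊕ Fin d)) :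
    EuclideanSpace ℝ (Fin d ⊕ Fin d) :=
  (WithLp.equiv 2 _).symm (Sum.elim (fun j => x (Sum.inr j)) (fun j => -(x (Sum.inl j))))

variable {d : ℕ}

lemma Jmap_apply_inl (x : EuclideanSpace ℝ (Fin d ⊕ Fin d)) (j : Fin d) :
    Jmap x (Sum.inl j) = -(x (Sum.inr j)) := rfl

lemma Jmap_apply_inr (x : EuclideanSpace ℝ (Fin d ⊕ Fin d)) (j : Fin d) :
    Jmap x (Sum.inr j) = x (Sum.inl j) := rfl

lemma Jinv_eq_neg_Jmap (x : EuclideanSpace ℝ (Fin d ⊕ Fin d)) : Jinv x = -(Jmap x) := by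
  ext i
  cases i <;> simp [Jmap, Jinv, WithLp.equiv_symm_apply, PiLp.toLp_apply]

lemma Jmap_Jinv (x : EuclideanSpace ℝ (Fin d ⊕ Fin d)) : Jmap (Jinv x) = x := by
  ext i
  cases i <;> simp [Jmap, Jinv, WithLp.equiv_symm_apply, PiLp.toLp_apply]

lemma Jmap_add (x y : EuclideanSpace ℝ (Fin d ⊕ Fin d)) :
    Jmap (x + y) = Jmap x + Jmap y := by
  ext i
  cases i <;> simp [Jmap, WithLp.equiv_symm_apply, PiLp.toLp_apply] <;> ring

lemma Jmap_sub (x y : EuclideanSpace ℝ (Fin d ⊕ Fin d)) :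
    Jmap (x - y) = Jmap x - Jmap y := by
  ext i
  cases i <;> simp [Jmap, WithLp.equiv_symm_apply, PiLp.toLp_apply] <;> ring

lemma Jmap_smul (c : ℝ) (x : EuclideanSpace ℝ (Fin d ⊕ Fin d)) :
    Jmap (c • x) = c • Jmap x := by
  ext i
  cases i <;> simp [Jmap, WithLp.equiv_symm_apply, PiLp.toLp_apply] <;> ring

lemma Jinv_add (x y : EuclideanSpace ℝ (Fin d ⊕ Fin d)) :
    Jinv (x + y) = Jinv x + Jinv y := by
  simp [Jinv_eq_neg_Jmap, Jmap_add]; abel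

lemma Jinv_smul (c : ℝ) (x : EuclideanSpace ℝ (Fin d ⊕ Fin d)) :
    Jinv (c • x) = c • Jinv x := by
  simp [Jinv_eq_neg_Jmap, Jmap_smul]

lemma inner_Jmap_Jmap (x y : EuclideanSpace ℝ (Fin d ⊕ Fin d)) :
    ⟪Jmap x, Jmap y⟫ = ⟪x, y⟫ := by
  simp only [PiLp.inner_apply, RCLike.inner_apply, conj_trivial]
  rw [Fintype.sum_sum_type, Fintype.sum_sum_type]
  simp [Jmap_apply_inl, Jmap_apply_inr]
  ring_nf

lemma inner_Jinv_Jmap (x y : EuclideanSpace ℝ (Fin d ⊕ Fin d)) :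
    ⟪Jinv x, Jmap y⟫ = -⟪x, y⟫ := by
  rw [Jinv_eq_neg_Jmap, inner_neg_left, inner_Jmap_Jmap]

/-- `Jinv` as a continuous linear map. -/
noncomputable def JinvL (d : ℕ) :
    EuclideanSpace ℝ (Fin d ⊕ Fin d) →L[ℝ] EuclideanSpace ℝ (Fin d ⊕ Fin d) :=
  LinearMap.toContinuousLinearMap
    { toFun := Jinv
      map_add' := Jinv_add
      map_smul' := Jinv_smul }

/-- the implicit midpoint map `ψ`, defined by
`ψ u = u + h • g ((u + ψ u)/2)` for the Hamiltonian vector field `g = J⁻¹ ∇G`,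
is symplectic: its Jacobian `M u` satisfies `(M u)ᵀ J (M u) = J`, i.e.
`⟪M u v, J (M u w)⟫ = ⟪v, J w⟫` for all `v, w`. -/
theorem stmt7 {d : ℕ}
    (G : EuclideanSpace ℝ (Fin d ⊕ Fin d) → ℝ) (hG : ContDiff ℝ (⊤ : ℕ∞) G)
    (h : ℝ)
    (ψ : EuclideanSpace ℝ (Fin d ⊕ Fin d) → EuclideanSpace ℝ (Fin d ⊕ Fin d))
    (hψsmooth : ContDiff ℝ (⊤ : ℕ∞) ψ)
    (hψ : ∀ u, ψ u = u + h • Jinv (gradient G ((2:ℝ)⁻¹ • (u + ψ u))))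
    (g' : EuclideanSpace ℝ (Fin d ⊕ Fin d) →
      (EuclideanSpace ℝ (Fin d ⊕ Fin d) →L[ℝ] EuclideanSpace ℝ (Fin d ⊕ Fin d)))
    (hg' : ∀ u, HasFDerivAt (fun w => Jinv (gradient G w)) (g' u) u)
    (hIFT : ∀ u, IsUnit (ContinuousLinearMap.id ℝ (EuclideanSpace ℝ (Fin d ⊕ Fin d))
        - (h / 2) • g' ((2:ℝ)⁻¹ • (u + ψ u))))
    (M : EuclideanSpace ℝ (Fin d ⊕ Fin d) →
      (EuclideanSpace ℝ (Fin d ⊕ Fin d) →L[ℝ] EuclideanSpace ℝ (Fin d ⊕ Fin d)))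
    (hM : ∀ u, HasFDerivAt ψ (M u) u) :
    ∀ u v w, ⟪M u v, Jmap (M u w)⟫ = ⟪v, Jmap w⟫ := by
  classical
  have hGdiff : Differentiable ℝ G := hG.differentiable (by simp)
  have hG'diff : Differentiable ℝ (fderiv ℝ G) :=
    (hG.fderiv_right (m := 1) (by exact WithTop.coe_le_coe.mpr le_top)).differentiable one_ne_zero
  intro u v w
  set m : EuclideanSpace ℝ (Fin d ⊕ Fin d) := (2:ℝ)⁻¹ • (u + ψ u) with hm
  set H := fderiv ℝ (fderiv ℝ G) m with hH
  have hHder : HasFDerivAt (fderiv ℝ G) H m := (hG'diff m).hasFDerivAt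
  have hHsymm : ∀ x y, H x y = H y x := fun x y =>
    second_derivative_symmetric (fun z => (hGdiff z).hasFDerivAt) hHder x y
  set T := (InnerProductSpace.toDual ℝ
      (EuclideanSpace ℝ (Fin d ⊕ Fin d))).symm.toContinuousLinearEquiv.toContinuousLinearMap
    with hT
  have hgradder : HasFDerivAt (gradient G) (T.comp H) m := by
    have : (gradient G) = fun z => T (fderiv ℝ G z) := funext fun z => rfl
    rw [this]
    exact (T.hasFDerivAt).comp m hHder
  have hgder : HasFDerivAt (fun z => Jinv (gradient G z)) ((JinvL d).comp (T.comp H)) m :=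
    ((JinvL d).hasFDerivAt).comp m hgradder
  have hAeq : g' m = (JinvL d).comp (T.comp H) := (hg' m).unique hgder
  set A := g' m with hA
  have hskew : ∀ x y, ⟪A x, Jmap y⟫ + ⟪x, Jmap (A y)⟫ = 0 := by
    intro x y
    have h1 : A x = Jinv (T (H x)) := by rw [hAeq]; rfl
    have h2 : A y = Jinv (T (H y)) := by rw [hAeq]; rfl
    rw [h1, h2, inner_Jinv_Jmap, Jmap_Jinv]
    have e1 : ⟪T (H x), y⟫ = H x y := InnerProductSpace.toDual_symm_apply
    have e2 : ⟪x, T (H y)⟫ = H y x := by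
      rw [real_inner_comm]; exact InnerProductSpace.toDual_symm_apply
    rw [e1, e2, hHsymm x y]; ring
  have hmidder : HasFDerivAt (fun x => (2:ℝ)⁻¹ • (x + ψ x))
      ((2:ℝ)⁻¹ • (ContinuousLinearMap.id ℝ (EuclideanSpace ℝ (Fin d ⊕ Fin d)) + M u)) u :=
    ((hasFDerivAt_id u).add (hM u)).const_smul ((2:ℝ)⁻¹)
  have hMeq : M u = ContinuousLinearMap.id ℝ (EuclideanSpace ℝ (Fin d ⊕ Fin d))
      + h • (A.comp ((2:ℝ)⁻¹ • (ContinuousLinearMap.id ℝ (EuclideanSpace ℝ (Fin d ⊕ Fin d))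
        + M u))) := by
    refine (hM u).unique ?_
    have hrhs : HasFDerivAt
        (fun x => x + h • Jinv (gradient G ((2:ℝ)⁻¹ • (x + ψ x))))
        (ContinuousLinearMap.id ℝ (EuclideanSpace ℝ (Fin d ⊕ Fin d))
          + h • (A.comp ((2:ℝ)⁻¹ • (ContinuousLinearMap.id ℝ (EuclideanSpace ℝ (Fin d ⊕ Fin d))
            + M u)))) u :=
      (hasFDerivAt_id u).add (((hg' m).comp u hmidder).const_smul h)
    have hψfun : ψ = fun x => x + h • Jinv (gradient G ((2:ℝ)⁻¹ • (x + ψ x))) := funext hψ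
    rw [hψfun]; exact hrhs
  have hMpt : ∀ x, M u x = x + (h * 2⁻¹) • A (x + M u x) := by
    intro x
    conv_lhs => rw [hMeq]
    simp only [ContinuousLinearMap.add_apply, ContinuousLinearMap.id_apply,
      ContinuousLinearMap.smul_apply, ContinuousLinearMap.comp_apply, map_smul, smul_smul]
  set Pv := v + M u v with hPv
  set Pw := w + M u w with hPw
  set c : ℝ := h * 2⁻¹ with hc
  have hv1 : M u v - v = c • A Pv := by rw [hMpt v]; abel
  have hw1 : M u w - w = c • A Pw := by rw [hMpt w]; abel
  have hv2 : M u v + v = Pv := by rw [hPv]; abel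
  have hw2 : M u w + w = Pw := by rw [hPw]; abel
  have key : ⟪M u v - v, Jmap (M u w + w)⟫ + ⟪M u v + v, Jmap (M u w - w)⟫ = 0 := by
    rw [hv1, hw1, hv2, hw2, real_inner_smul_left, Jmap_smul, real_inner_smul_right, ← mul_add,
      hskew Pv Pw, mul_zero]
  have expand : ⟪M u v - v, Jmap (M u w + w)⟫ + ⟪M u v + v, Jmap (M u w - w)⟫
      = 2 * (⟪M u v, Jmap (M u w)⟫ - ⟪v, Jmap w⟫) := by
    rw [Jmap_add, Jmap_sub, inner_sub_left, inner_add_left, inner_add_right, inner_add_right,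
      inner_sub_right, inner_sub_right]
    ring
  rw [expand] at key
  linarith
end

section
/- When k(u) = A u is linear (so φ_t(u) = e^{tA}u), one step of the FCRK method from u_j coincides with one step of Lawson's generalized RK method: applying an RK step to the vector field f(t,U) = e^{-(t-τ_j)A} g(e^{(t-τ_j)A} U) with the local reference time τ_j = t_j + h/2, pre- and post-composed with e^{(h/2)A}, equals e^{(j+1)hA} · (RK step applied to F(t,U) = e^{-(t-t_0)A} g(e^{(t-t_0)A}U) at the point e^{-(t_j-t_0)A}u_j). -/
open Matrix

/-- Matrix exponential flow `e^{tA}` of the linear field `k u = A u`. -/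
noncomputable def expFlow {D : ℕ} (A : Matrix (Fin D) (Fin D) ℝ) (t : ℝ) :
    Matrix (Fin D) (Fin D) ℝ :=
  NormedSpace.exp (t • A)


lemma expFlow_add {D : ℕ} (A : Matrix (Fin D) (Fin D) ℝ) (s t : ℝ) :
    expFlow A s * expFlow A t = expFlow A (s + t) := by
  unfold expFlow
  rw [add_smul, Matrix.exp_add_of_commute (s • A) (t • A)
    (((Commute.refl A).smul_left s).smul_right t)]

lemma expFlow_comp {D : ℕ} (A : Matrix (Fin D) (Fin D) ℝ) (s t : ℝ) (v : Fin D → ℝ) :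
    expFlow A s *ᵥ (expFlow A t *ᵥ v) = expFlow A (s + t) *ᵥ v := by
  rw [Matrix.mulVec_mulVec, expFlow_add]

lemma mulVec_sum' {D s : ℕ} (M : Matrix (Fin D) (Fin D) ℝ) (f : Fin s → (Fin D → ℝ)) :
    M *ᵥ (∑ i, f i) = ∑ i, M *ᵥ f i :=
  map_sum M.mulVecLin f Finset.univ

/-- when `k u = A u` is linear (`φ_t u = e^{tA} u`), one step of the FCRK
method from `u_j` coincides with one step of Lawson's generalized RK method. If `Z` are
the Lawson stages for the globally transformed field `F t U = e^{-(t-t₀)A} g (e^{(t-t₀)A} U)`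
starting at `U_j = e^{-(t_j-t₀)A} u_j`, then `W i = e^{(τ_j-t₀)A} Z i` (with
`τ_j = t_j + h/2`) are FCRK stages for the locally transformed field
`f_j t U = e^{-(t-τ_j)A} g (e^{(t-τ_j)A} U)` starting at `e^{(h/2)A} u_j`, and the FCRK
step value (post-composed with `e^{(h/2)A}`) equals `e^{(t_{j+1}-t₀)A}` times the Lawson
step value. -/
theorem stmt12 {D s : ℕ}
    (A : Matrix (Fin D) (Fin D) ℝ)
    (g : (Fin D → ℝ) → (Fin D → ℝ)) (hg : ContDiff ℝ (⊤ : ℕ∞) g)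
    (a : Fin s → Fin s → ℝ) (b : Fin s → ℝ) (c : Fin s → ℝ)
    (hc : ∀ i, c i = ∑ j, a i j)
    (t₀ tj h : ℝ) (uj : Fin D → ℝ)
    (F fj : ℝ → (Fin D → ℝ) → (Fin D → ℝ))
    (hF : ∀ t U, F t U = expFlow A (-(t - t₀)) *ᵥ g (expFlow A (t - t₀) *ᵥ U))
    (hfj : ∀ t U, fj t U =
      expFlow A (-(t - (tj + h / 2))) *ᵥ g (expFlow A (t - (tj + h / 2)) *ᵥ U))
    (Z : Fin s → (Fin D → ℝ))
    (hZ : ∀ i, Z i = (expFlow A (-(tj - t₀)) *ᵥ uj)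
        + h • ∑ j, a i j • F (tj + c j * h) (Z j)) :
    (∀ i, expFlow A (tj + h / 2 - t₀) *ᵥ Z i =
        (expFlow A (h / 2) *ᵥ uj)
          + h • ∑ j, a i j • fj (tj + c j * h) (expFlow A (tj + h / 2 - t₀) *ᵥ Z j)) ∧
    expFlow A (h / 2) *ᵥ
        ((expFlow A (h / 2) *ᵥ uj)
          + h • ∑ i, b i • fj (tj + c i * h) (expFlow A (tj + h / 2 - t₀) *ᵥ Z i))
      = expFlow A (tj + h - t₀) *ᵥ
        ((expFlow A (-(tj - t₀)) *ᵥ uj) + h • ∑ i, b i • F (tj + c i * h) (Z i)) := by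

  have hkey : ∀ t v, fj t (expFlow A (tj + h / 2 - t₀) *ᵥ v)
      = expFlow A (tj + h / 2 - t₀) *ᵥ F t v := by
    intro t v
    rw [hfj, hF, expFlow_comp, expFlow_comp]
    have e1 : t - (tj + h / 2) + (tj + h / 2 - t₀) = t - t₀ := by ring
    have e2 : tj + h / 2 - t₀ + -(t - t₀) = -(t - (tj + h / 2)) := by ring
    rw [e1, e2]
  constructor
  · intro i
    rw [hZ i, Matrix.mulVec_add, expFlow_comp, Matrix.mulVec_smul, mulVec_sum']
    have e3 : tj + h / 2 - t₀ + -(tj - t₀) = h / 2 := by ring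
    rw [e3]
    congr 1
    congr 1
    refine Finset.sum_congr rfl fun j _ => ?_
    rw [Matrix.mulVec_smul, hkey]
  · rw [Matrix.mulVec_add, Matrix.mulVec_add, Matrix.mulVec_smul, Matrix.mulVec_smul,
      mulVec_sum', mulVec_sum', expFlow_comp, expFlow_comp]
    have e4 : h / 2 + h / 2 = tj + h - t₀ + -(tj - t₀) := by ring
    rw [e4]
    congr 1
    congr 1
    refine Finset.sum_congr rfl fun i _ => ?_
    rw [Matrix.mulVec_smul, Matrix.mulVec_smul, hkey, expFlow_comp]
    have e5 : h / 2 + (tj + h / 2 - t₀) = tj + h - t₀ := by ring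
    rw [e5]
end

section
/- If I : ℝ^D → ℝ is a common first integral of the vector fields k and g (i.e., ∇I(u)·k(u) = 0 and ∇I(u)·g(u) = 0 for all u), then I is a first integral of the transformed non-autonomous system U' = (φ'_{t}(U))⁻¹ g(φ_{t}(U)), where φ_t is the flow of u' = k(u): for any solution U(t), I(U(t)) is constant. -/
/-- if `I` is a common first integral of the vector fields `k` and `g`
(`∇I·k ≡ 0` and `∇I·g ≡ 0`), then `I` is a first integral of the transformed
non-autonomous system `U' = (φ'_t(U))⁻¹ g(φ_t(U))` (where `φ_t` is the flow of
`u' = k u`, with Jacobians `φ' t U` with two-sided inverses `ψ' t U`): along any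
solution `U`, `I (U t)` is constant. -/
theorem stmt17 {D : ℕ}
    (k g : (Fin D → ℝ) → (Fin D → ℝ))
    (hk : ContDiff ℝ (⊤ : ℕ∞) k) (hg : ContDiff ℝ (⊤ : ℕ∞) g)
    (φ : ℝ → (Fin D → ℝ) → (Fin D → ℝ))
    (hφsmooth : ContDiff ℝ (⊤ : ℕ∞) (fun pr : ℝ × (Fin D → ℝ) => φ pr.1 pr.2))
    (hφ0 : ∀ x, φ 0 x = x)
    (hφflow : ∀ t x, HasDerivAt (fun s => φ s x) (k (φ t x)) t)
    (φ' : ℝ → (Fin D → ℝ) → ((Fin D → ℝ) →L[ℝ] (Fin D → ℝ)))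
    (hφ' : ∀ t x, HasFDerivAt (φ t) (φ' t x) x)
    (ψ' : ℝ → (Fin D → ℝ) → ((Fin D → ℝ) →L[ℝ] (Fin D → ℝ)))
    (hinv₁ : ∀ t x, (φ' t x).comp (ψ' t x) = ContinuousLinearMap.id ℝ (Fin D → ℝ))
    (hinv₂ : ∀ t x, (ψ' t x).comp (φ' t x) = ContinuousLinearMap.id ℝ (Fin D → ℝ))
    (I : (Fin D → ℝ) → ℝ)
    (I' : (Fin D → ℝ) → ((Fin D → ℝ) →L[ℝ] ℝ))
    (hI : ∀ u, HasFDerivAt I (I' u) u)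
    (hIk : ∀ u, I' u (k u) = 0)
    (hIg : ∀ u, I' u (g u) = 0)
    (U : ℝ → (Fin D → ℝ))
    (hU : ∀ t, HasDerivAt U (ψ' t (U t) (g (φ t (U t)))) t) :
    ∀ t₁ t₂ : ℝ, I (U t₁) = I (U t₂) := by

  -- Step 1: I is constant along the flow φ
  have hflowconst : ∀ t x, I (φ t x) = I x := by
    intro t x
    have hdiff : ∀ s : ℝ, HasDerivAt (fun s => I (φ s x)) 0 s := by
      intro s
      have := (hI (φ s x)).comp_hasDerivAt s (hφflow s x)
      rw [hIk (φ s x)] at this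
      exact this
    have hconst : ∀ s : ℝ, I (φ s x) = I (φ 0 x) := by
      have h1 : Differentiable ℝ (fun s => I (φ s x)) :=
        fun s => (hdiff s).differentiableAt
      have h2 : ∀ s, deriv (fun s => I (φ s x)) s = 0 :=
        fun s => (hdiff s).deriv
      intro s
      exact is_const_of_deriv_eq_zero h1 h2 s 0
    simpa [hφ0] using hconst t
  -- Step 2: chain rule identity I' x = I' (φ t x) ∘ φ' t x
  have hchain : ∀ t x, (I' (φ t x)).comp (φ' t x) = I' x := by
    intro t x
    have h1 : HasFDerivAt (fun y => I (φ t y)) ((I' (φ t x)).comp (φ' t x)) x :=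
      (hI (φ t x)).comp x (hφ' t x)
    have h2 : HasFDerivAt (fun y => I (φ t y)) (I' x) x := by
      have : (fun y => I (φ t y)) = I := funext fun y => hflowconst t y
      rw [this]; exact hI x
    exact h1.unique h2
  -- Step 3: derivative of I ∘ U is zero
  have hderiv : ∀ t, HasDerivAt (fun t => I (U t)) 0 t := by
    intro t
    have h := (hI (U t)).comp_hasDerivAt t (hU t)
    have key : I' (U t) (ψ' t (U t) (g (φ t (U t)))) = 0 := by
      have := congrFun (congrArg (fun L : (Fin D → ℝ) →L[ℝ] ℝ => (L : (Fin D → ℝ) → ℝ))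
        (hchain t (U t))) (ψ' t (U t) (g (φ t (U t))))
      have hcomp : (φ' t (U t)) ((ψ' t (U t)) (g (φ t (U t)))) = g (φ t (U t)) := by
        have := congrFun (congrArg (fun L : (Fin D → ℝ) →L[ℝ] (Fin D → ℝ) =>
          (L : (Fin D → ℝ) → (Fin D → ℝ))) (hinv₁ t (U t))) (g (φ t (U t)))
        simpa using this
      simp only [ContinuousLinearMap.comp_apply, ContinuousLinearMap.coe_comp'] at this
      rw [← this]
      simp only [Function.comp_apply, hcomp]
      exact hIg (φ t (U t))
    rw [key] at h
    exact h
  intro t₁ t₂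
  have h1 : Differentiable ℝ (fun t => I (U t)) := fun t => (hderiv t).differentiableAt
  have h2 : ∀ t, deriv (fun t => I (U t)) t = 0 := fun t => (hderiv t).deriv
  exact is_const_of_deriv_eq_zero h1 h2 t₁ t₂
end
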